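/- Isotropic subspace perturbation bound: let B be a real m×n matrix of rank r with singular values s₁ ≥ ... ≥ s_r > 0, and let Δ = s_r. Let A = B + W with ε := ‖W‖ < Δ. If x ∈ ℝ^n is a unit vector with Ax = z·y for a unit vector y ∈ ℝ^m and z ≥ Δ − ε > 0, and F ⊂ ℝ^m is the span of the left singular vectors of B corresponding to s₁,...,s_r, then dist(y, F) ≤ ε/(Δ − ε). -/

import Mathlib

noncomputable def enorm' {m : ℕ} (v : Fin m → ℝ) : ℝ := Real.sqrt (∑ i, v i ^ 2)

noncomputable def specNorm {m n : ℕ} (A : Matrix (Fin m) (Fin n) ℝ) : ℝ :=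
  ‖(LinearMap.toContinuousLinearMap (Matrix.toEuclideanLin A))‖

theorem Matrix.isHermitian_transpose_mul_self {m n : ℕ} (A : Matrix (Fin m) (Fin n) ℝ) :
    (Matrix.transpose A * A).IsHermitian := by
  have h := Matrix.isHermitian_conjTranspose_mul_self A
  rwa [Matrix.conjTranspose_eq_transpose_of_trivial] at h

noncomputable def sval {m n : ℕ} (A : Matrix (Fin m) (Fin n) ℝ) (i : Fin n) : ℝ :=
  Real.sqrt ((Matrix.isHermitian_transpose_mul_self A).eigenvalues
    (Tuple.sort (Matrix.isHermitian_transpose_mul_self A).eigenvalues i.rev))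

/-- Euclidean distance from a vector to a subspace of `ℝ^m`. -/
noncomputable def distSub {m : ℕ} (y : Fin m → ℝ) (F : Submodule ℝ (Fin m → ℝ)) : ℝ :=
  ⨅ f : F, enorm' (y - (f : Fin m → ℝ))

/-!
`y = z⁻¹ (B x + W x)` and `z⁻¹ B x` lies in the range of `B`, so `y` is within
`‖W x‖ / z ≤ ε / (Δ - ε)` of that range.
-/

lemma enorm'_eq_norm_toLp {m : ℕ} (v : Fin m → ℝ) : enorm' v = ‖WithLp.toLp 2 v‖ := by
  simp only [enorm', EuclideanSpace.norm_eq, Real.norm_eq_abs, sq_abs]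

lemma enorm'_smul {m : ℕ} (c : ℝ) (v : Fin m → ℝ) : enorm' (c • v) = |c| * enorm' v := by
  rw [enorm'_eq_norm_toLp, enorm'_eq_norm_toLp, WithLp.toLp_smul, norm_smul, Real.norm_eq_abs]

lemma enorm'_mulVec_le {m n : ℕ} (A : Matrix (Fin m) (Fin n) ℝ) (x : Fin n → ℝ) :
    enorm' (A.mulVec x) ≤ specNorm A * enorm' x := by
  rw [enorm'_eq_norm_toLp, enorm'_eq_norm_toLp]
  exact (LinearMap.toContinuousLinearMap (Matrix.toEuclideanLin A)).le_opNorm (WithLp.toLp 2 x)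

lemma distSub_le_of_mem {m : ℕ} (y : Fin m → ℝ) {F : Submodule ℝ (Fin m → ℝ)}
    {f : Fin m → ℝ} (hf : f ∈ F) : distSub y F ≤ enorm' (y - f) :=
  ciInf_le ⟨0, by rintro _ ⟨g, rfl⟩; exact Real.sqrt_nonneg _⟩ (⟨f, hf⟩ : F)

lemma distSub_range_le_of_add_mulVec_eq_smul {m n : ℕ} (B W : Matrix (Fin m) (Fin n) ℝ)
    {x : Fin n → ℝ} {y : Fin m → ℝ} {z : ℝ} (hz : z ≠ 0) (hAx : (B + W).mulVec x = z • y) :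
    distSub y (LinearMap.range B.mulVecLin) ≤ specNorm W * enorm' x / |z| := by
  have hy : y - z⁻¹ • B.mulVec x = z⁻¹ • W.mulVec x := by
    rw [eq_inv_smul_iff₀ hz |>.mpr hAx.symm, Matrix.add_mulVec, smul_add, add_sub_cancel_left]
  have hmem : z⁻¹ • B.mulVec x ∈ LinearMap.range B.mulVecLin :=
    ⟨z⁻¹ • x, by rw [Matrix.mulVecLin_apply, Matrix.mulVec_smul]⟩
  calc distSub y (LinearMap.range B.mulVecLin)
      ≤ enorm' (z⁻¹ • W.mulVec x) := hy ▸ distSub_le_of_mem y hmem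
    _ = enorm' (W.mulVec x) / |z| := by rw [enorm'_smul, abs_inv, inv_mul_eq_div]
    _ ≤ specNorm W * enorm' x / |z| := by gcongr; exact enorm'_mulVec_le W x

theorem stmt9_general {m n : ℕ} (B W : Matrix (Fin m) (Fin n) ℝ)
    (Δ ε z : ℝ)
    (hε : ε = specNorm W) (hεΔ : ε < Δ)
    (x : Fin n → ℝ) (y : Fin m → ℝ) (hx : enorm' x = 1)
    (hAx : (B + W).mulVec x = z • y) (hz : Δ - ε ≤ z) :
    distSub y (LinearMap.range (Matrix.mulVecLin B)) ≤ ε / (Δ - ε) := by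
  have hgap : 0 < Δ - ε := sub_pos.mpr hεΔ
  have hzpos : 0 < z := hgap.trans_le hz
  have hεnonneg : 0 ≤ ε := hε ▸ norm_nonneg _
  calc distSub y (LinearMap.range (Matrix.mulVecLin B))
      ≤ specNorm W * enorm' x / |z| := distSub_range_le_of_add_mulVec_eq_smul B W hzpos.ne' hAx
    _ = ε / z := by rw [← hε, hx, mul_one, abs_of_pos hzpos]
    _ ≤ ε / (Δ - ε) := div_le_div_of_nonneg_left hεnonneg hgap hz

/-- Isotropic subspace perturbation bound: a left singular vector `y` of `A = B + W`
belonging to a singular value `z ≥ Δ − ε` is within `ε/(Δ − ε)` of the range of `B`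
(the span of the left singular vectors of `B` corresponding to its nonzero singular
values), where `Δ` is the smallest nonzero singular value of `B` and `ε = ‖W‖ < Δ`. -/
theorem stmt9 {m n : ℕ} (B W : Matrix (Fin m) (Fin n) ℝ)
    (Δ ε z : ℝ) (hΔpos : 0 < Δ)
    (hΔle : ∀ k : Fin n, sval B k ≠ 0 → Δ ≤ sval B k)
    (hΔmem : ∃ k : Fin n, sval B k = Δ)
    (hε : ε = specNorm W) (hεΔ : ε < Δ)
    (x : Fin n → ℝ) (y : Fin m → ℝ) (hx : enorm' x = 1) (hy : enorm' y = 1)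
    (hAx : (B + W).mulVec x = z • y) (hz : Δ - ε ≤ z) :
    distSub y (LinearMap.range (Matrix.mulVecLin B)) ≤ ε / (Δ - ε) :=
  stmt9_general B W Δ ε z hε hεΔ x y hx hAx hz
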